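/- Let M be a prime, let χ be a nontrivial Dirichlet character modulo M, and let v be an integer with gcd(v, M) = 1. Then ∑_{a mod M} D_χ(v·a; M) · conj( D_χ(a; M) ) equals M·(M − 2) if v ≡ 1 (mod M), and equals −M·(1 + χ(v)) if v ≢ 1 (mod M). Here conj denotes complex conjugation. -/

import Mathlib

open Complex

/-- `eAdd q x = exp(2πi x / q)`. -/
noncomputable def eAdd (q : ℕ) (x : ℤ) : ℂ :=
  Complex.exp (2 * Real.pi * Complex.I * x / q)

/-- `D_χ(u; M) = ∑_{b mod M, (b(b−1),M)=1} χ̄(b−1) e_M((b* − 1) u)`. -/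
noncomputable def dSum {M : ℕ} [NeZero M] (χ : DirichletCharacter ℂ M) (u : ℤ) : ℂ :=
  ∑ b ∈ Finset.univ.filter (fun b : ZMod M => Nat.gcd (b * (b - 1)).val M = 1),
    (starRingEnd ℂ) (χ (b - 1)) * eAdd M (((b⁻¹ - 1 : ZMod M).val : ℤ) * u)

/-!
With the frequency `x = b* − 1` we have `b − 1 = −x/(x + 1)`, so `D_χ` is the Fourier transform
of `c(x) = χ̄(−x/(x + 1))`. Orthogonality of additive characters turns the second moment into
`M ∑ₓ c(x) conj (c(vx))`, a sum of `χ` over a ratio of two Möbius transforms of `x`. The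
substitution `y = (vx + 1)⁻¹` makes that ratio the affine function `1 + (v − 1) y`, except at the
two points `y = 0, 1` where a term vanishes; the affine character sum is `M` for `v = 1` and `0`
otherwise, and the two missing values contribute `−χ(1) − χ(v)`.
-/

open ComplexConjugate

lemma ZMod.gcd_val_eq_one_iff_isUnit {n : ℕ} [NeZero n] (z : ZMod n) :
    Nat.gcd z.val n = 1 ↔ IsUnit z := by
  rw [← Nat.Coprime, ← ZMod.isUnit_iff_coprime, ZMod.natCast_zmod_val]

lemma eAdd_eq_stdAddChar (q : ℕ) [NeZero q] (x : ℤ) :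
    eAdd q x = ZMod.stdAddChar (x : ZMod q) := by
  rw [eAdd, ZMod.stdAddChar_coe]

lemma AddChar.sum_fourier_dilate_mul_conj_fourier {R : Type*} [CommRing R] [Fintype R]
    [DecidableEq R] {ψ : AddChar R ℂ} (hψ : ψ.IsPrimitive) (f g : R → ℂ) (v : R) :
    ∑ a, (∑ x, f x * ψ (x * (v * a))) * conj (∑ y, g y * ψ (y * a)) =
      Fintype.card R * ∑ x, f x * conj (g (v * x)) := by
  calc _ = ∑ x, ∑ y, f x * conj (g y) * ∑ a, ψ (a * (v * x - y)) := by
        simp_rw [map_sum, Finset.sum_mul_sum, Finset.mul_sum, map_mul, ← AddChar.map_neg_eq_conj]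
        rw [Finset.sum_comm]
        refine Finset.sum_congr rfl fun x _ => ?_
        rw [Finset.sum_comm]
        refine Finset.sum_congr rfl fun y _ => Finset.sum_congr rfl fun a _ => ?_
        rw [show a * (v * x - y) = x * (v * a) + -(y * a) by ring, AddChar.map_add_eq_mul]
        ring
    _ = _ := by
        simp_rw [AddChar.sum_mulShift _ hψ, sub_eq_zero, Nat.cast_ite, Nat.cast_zero, mul_ite,
          mul_zero, Finset.sum_ite_eq, Finset.mem_univ, if_true, Finset.mul_sum, mul_comm]

section FiniteField

variable {K : Type*} [Field K] [Fintype K]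

lemma MulChar.conj_apply_mul_apply (χ : MulChar K ℂ) (a b : K) :
    conj (χ a) * χ b = χ (b * a⁻¹) := by
  rw [← RCLike.star_def, MulChar.star_apply', MulChar.inv_apply', map_mul, mul_comm]

lemma MulChar.sum_apply_add_mul_eq_zero {χ : MulChar K ℂ} (hχ : χ ≠ 1) (a : K) {b : K}
    (hb : b ≠ 0) : ∑ y, χ (a + b * y) = 0 :=
  (((Equiv.mulLeft₀ b hb).trans (Equiv.addLeft a)).sum_comp χ).trans
    (MulChar.sum_eq_zero_of_ne_one hχ)

/-- The junk value `0⁻¹ = 0` makes `dCoeff χ` vanish at `x = -1` as well as at `x = 0`, the two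
frequencies `b⁻¹ - 1` that `dSum` excludes. -/
noncomputable def dCoeff (χ : MulChar K ℂ) (x : K) : ℂ :=
  conj (χ (-x * (x + 1)⁻¹))

lemma sum_dCoeff_mul_conj_dCoeff [DecidableEq K] {χ : MulChar K ℂ} (hχ : χ ≠ 1) {v : K}
    (hv : v ≠ 0) :
    ∑ x, dCoeff χ x * conj (dCoeff χ (v * x)) =
      (if v = 1 then (Fintype.card K : ℂ) else 0) - 1 - χ v := by
  set r : K → K := fun x => -x * (x + 1)⁻¹ with hr
  set q : K → K := fun x => r (v * x) * (r x)⁻¹ with hq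
  -- the inverse of the substitution `y = (v * x + 1)⁻¹`
  let e : K ≃ K :=
    (Equiv.inv K).trans ((Equiv.subRight 1).trans (Equiv.mulRight₀ v⁻¹ (inv_ne_zero hv)))
  have he : ∀ y, e y = (y⁻¹ - 1) * v⁻¹ := fun _ => rfl
  have hratio : ∀ y, y ≠ 0 → y ≠ 1 → q (e y) = 1 + (v - 1) * y := by
    intro y hy0 hy1
    simp only [hq, hr, he, mul_inv_rev, inv_inv]
    field_simp
    ring
  have hsum_affine : ∑ y, χ (1 + (v - 1) * y) = if v = 1 then (Fintype.card K : ℂ) else 0 := by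
    split_ifs with h
    · simp [h]
    · exact MulChar.sum_apply_add_mul_eq_zero hχ 1 (sub_ne_zero.mpr h)
  have hdefect : ∑ y, (χ (1 + (v - 1) * y) - χ (q (e y))) = 1 + χ v := by
    rw [Fintype.sum_eq_add 0 1 zero_ne_one]
    · simp [hq, hr, he, hv, MulChar.map_zero]
    · rintro y ⟨hy0, hy1⟩
      rw [hratio y hy0 hy1, sub_self]
  rw [Finset.sum_sub_distrib, hsum_affine] at hdefect
  calc ∑ x, dCoeff χ x * conj (dCoeff χ (v * x))
      = ∑ x, χ (q x) := by simp only [dCoeff, conj_conj, MulChar.conj_apply_mul_apply, hq, hr]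
    _ = ∑ y, χ (q (e y)) := (e.sum_comp _).symm
    _ = _ := by linear_combination -hdefect

end FiniteField

lemma dSum_eq_sum_dCoeff {M : ℕ} [Fact M.Prime] (χ : DirichletCharacter ℂ M) (u : ℤ) :
    dSum χ u = ∑ x, dCoeff χ x * ZMod.stdAddChar (x * (u : ZMod M)) := by
  rw [← ((Equiv.inv (ZMod M)).trans (Equiv.subRight 1)).sum_comp, dSum, Finset.sum_filter]
  refine Fintype.sum_congr _ _ fun b => ?_
  simp only [Equiv.trans_apply, Equiv.inv_apply, Equiv.subRight_apply,
    ZMod.gcd_val_eq_one_iff_isUnit, isUnit_iff_ne_zero, mul_ne_zero_iff, sub_ne_zero]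
  split_ifs with hb
  · rw [eAdd_eq_stdAddChar, dCoeff, sub_add_cancel, inv_inv, neg_mul, sub_mul,
      inv_mul_cancel₀ hb.1, one_mul, neg_sub]
    push_cast [ZMod.natCast_val, ZMod.cast_id]
    rfl
  · obtain h | h := not_and_or.mp hb <;> simp [dCoeff, not_not.mp h, MulChar.map_zero]

/-- Second-moment evaluation of the character sum `D_χ`. -/
theorem stmt_5 (M : ℕ) [Fact M.Prime] (χ : DirichletCharacter ℂ M) (hχ : χ ≠ 1)
    (v : ℤ) (hv : Int.gcd v M = 1) :
    ∑ a : ZMod M, dSum χ (v * (a.val : ℤ)) * (starRingEnd ℂ) (dSum χ (a.val : ℤ)) =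
      if ((v : ZMod M)) = 1 then (M : ℂ) * ((M : ℂ) - 2)
      else -(M : ℂ) * (1 + χ ((v : ZMod M))) := by
  have hv0 : (v : ZMod M) ≠ 0 := ((ZMod.coe_int_isUnit_iff_isCoprime v M).2
    (Int.isCoprime_iff_gcd_eq_one.2 (Int.gcd_comm v M ▸ hv))).ne_zero
  simp only [dSum_eq_sum_dCoeff, Int.cast_mul, Int.cast_natCast, ZMod.natCast_zmod_val]
  rw [AddChar.sum_fourier_dilate_mul_conj_fourier (ZMod.isPrimitive_stdAddChar M),
    sum_dCoeff_mul_conj_dCoeff hχ hv0, ZMod.card]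
  split_ifs with h
  · rw [h, map_one]
    ring
  · ring
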